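/- For 0 < M̄ ≤ M, the infima of the reduced functional satisfy h_{M̄}^r ≥ (M̄/M)^{3/2} h_M^r. -/

import Mathlib

open MeasureTheory Real Set Filter

noncomputable section

abbrev E2 := EuclideanSpace ℝ (Fin 2)

/-- The gravitational potential energy of a flat density. -/
def Epot (ρ : E2 → ℝ) : ℝ :=
  -(1/2) * ∫ p : E2 × E2, ρ p.1 * ρ p.2 / ‖p.1 - p.2‖

/-- Membership in the reduced constraint set F_M^r (for a given Ψ). -/
def inFM (Ψ : ℝ → ℝ) (M : ℝ) (ρ : E2 → ℝ) : Prop :=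
  (∀ x, 0 ≤ ρ x) ∧ MemLp ρ (4/3) volume ∧ Integrable ρ ∧ (∫ x, ρ x) = M ∧
    Integrable (fun x => Ψ (ρ x))

/-- The reduced energy-Casimir functional. -/
def Hr (Ψ : ℝ → ℝ) (ρ : E2 → ℝ) : ℝ := (∫ x, Ψ (ρ x)) + Epot ρ


/-! A density of mass `M'` compressed by the factor `b = √(M'/M) ≤ 1`, `ρ (b • x)`, has mass `M`.
Its Casimir term scales by `b⁻²` and its potential energy by `b⁻³` (the Newtonian kernel is
homogeneous of degree `-1` on the four-dimensional space of pairs), so with `∫ Ψ ∘ ρ ≥ 0` and `b ≤ 1`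
the energy of the compressed density is at most `b⁻³` times the original one. -/

theorem MeasureTheory.MemLp.comp_smul {E F : Type*} [NormedAddCommGroup E] [NormedSpace ℝ E]
    [MeasurableSpace E] [BorelSpace E] [FiniteDimensional ℝ E] [NormedAddCommGroup F]
    {μ : Measure E} [μ.IsAddHaarMeasure] {p : ENNReal} {f : E → F} (hf : MemLp f p μ)
    {R : ℝ} (hR : R ≠ 0) : MemLp (fun x => f (R • x)) p μ := by
  let t : E ≃ᵐ E := (Homeomorph.smul (isUnit_iff_ne_zero.2 hR).unit).toMeasurableEquiv
  have hmap : MemLp f p (μ.map (R • ·)) := by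
    rw [Measure.map_addHaar_smul μ hR]
    exact hf.smul_measure ENNReal.ofReal_ne_top
  exact (MeasurableEquiv.memLp_map_measure_iff t).mp hmap

theorem EReal.coe_mul_sInf_le_sInf {c : ℝ} (hc : 0 ≤ c) {S T : Set EReal}
    (h : ∀ y ∈ T, ∃ x ∈ S, (c : EReal) * x ≤ y) : (c : EReal) * sInf S ≤ sInf T := by
  refine le_sInf fun y hy => ?_
  obtain ⟨x, hxS, hxy⟩ := h y hy
  exact (mul_le_mul_of_nonneg_left (sInf_le hxS) (EReal.coe_nonneg.2 hc)).trans hxy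

theorem integral_comp_smul_E2 (f : E2 → ℝ) (b : ℝ) :
    ∫ x, f (b • x) = (b ^ 2)⁻¹ * ∫ x, f x := by
  rw [Measure.integral_comp_smul, finrank_euclideanSpace_fin, smul_eq_mul,
    abs_of_nonneg (by positivity)]

section Rescaling

variable {Ψ : ℝ → ℝ} {ρ : E2 → ℝ} {b M : ℝ}

theorem Epot_comp_smul (hb : 0 < b) : Epot (fun x => ρ (b • x)) = (b ^ 3)⁻¹ * Epot ρ := by
  let K : E2 × E2 → ℝ := fun q => ρ q.1 * ρ q.2 / ‖q.1 - q.2‖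
  have hK : ∀ p : E2 × E2, ρ (b • p.1) * ρ (b • p.2) / ‖p.1 - p.2‖ = b * K (b • p) := by
    rintro ⟨x, y⟩
    have hnorm : ‖b • x - b • y‖ = b * ‖x - y‖ := by
      rw [← smul_sub, norm_smul, Real.norm_eq_abs, abs_of_pos hb]
    simp only [K, Prod.smul_fst, Prod.smul_snd, hnorm]
    rcases eq_or_ne ‖x - y‖ 0 with h0 | h0
    · simp [h0]
    · field_simp
  have hfinrank : Module.finrank ℝ (E2 × E2) = 4 := by simp
  have : (volume : Measure (E2 × E2)).IsAddHaarMeasure := Measure.prod.instIsAddHaarMeasure _ _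
  have hint : ∫ p : E2 × E2, K (b • p) = (b ^ 4)⁻¹ * ∫ p, K p := by
    rw [Measure.integral_comp_smul, hfinrank, smul_eq_mul, abs_of_pos (by positivity)]
  simp only [Epot, hK, integral_const_mul, hint, K]
  field_simp

theorem inFM_comp_smul (hb : b ≠ 0) (h : inFM Ψ M ρ) :
    inFM Ψ ((b ^ 2)⁻¹ * M) (fun x => ρ (b • x)) := by
  obtain ⟨hpos, hLp, hint, hmass, hΨint⟩ := h
  refine ⟨fun x => hpos _, hLp.comp_smul hb, hint.comp_smul hb, ?_,
    hΨint.comp_smul (f := fun x => Ψ (ρ x)) hb⟩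
  rw [integral_comp_smul_E2, hmass]

theorem Hr_comp_smul (hb : 0 < b) :
    Hr Ψ (fun x => ρ (b • x)) = (b ^ 2)⁻¹ * (∫ x, Ψ (ρ x)) + (b ^ 3)⁻¹ * Epot ρ := by
  rw [Hr, Epot_comp_smul hb, integral_comp_smul_E2 (fun x => Ψ (ρ x))]

theorem pow_three_mul_Hr_comp_smul_le (hΨ0 : ∀ s : ℝ, 0 ≤ s → 0 ≤ Ψ s) (hρ : ∀ x, 0 ≤ ρ x)
    (hb0 : 0 < b) (hb1 : b ≤ 1) : b ^ 3 * Hr Ψ (fun x => ρ (b • x)) ≤ Hr Ψ ρ := by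
  have hΨρ : 0 ≤ ∫ x, Ψ (ρ x) := integral_nonneg fun x => hΨ0 _ (hρ x)
  have hscaled : b ^ 3 * Hr Ψ (fun x => ρ (b • x)) = b * (∫ x, Ψ (ρ x)) + Epot ρ := by
    rw [Hr_comp_smul hb0]
    field_simp
  rw [hscaled, Hr]
  nlinarith

end Rescaling

theorem stmt14 (Ψ : ℝ → ℝ) (hΨ0 : ∀ s : ℝ, 0 ≤ s → 0 ≤ Ψ s)
    (M M' : ℝ) (hM' : 0 < M') (hMM : M' ≤ M) :
    (((M'/M) ^ (3/2 : ℝ) : ℝ) : EReal) *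
        sInf {y : EReal | ∃ ρ : E2 → ℝ, inFM Ψ M ρ ∧ y = (Hr Ψ ρ : EReal)} ≤
      sInf {y : EReal | ∃ ρ : E2 → ℝ, inFM Ψ M' ρ ∧ y = (Hr Ψ ρ : EReal)} := by
  have hratio : 0 < M' / M := div_pos hM' (hM'.trans_le hMM)
  set b := √(M' / M)
  have hb : 0 < b := Real.sqrt_pos.2 hratio
  have hb1 : b ≤ 1 := Real.sqrt_le_one.2 ((div_le_one (hM'.trans_le hMM)).2 hMM)
  have hmass : (b ^ 2)⁻¹ * M' = M := by
    rw [Real.sq_sqrt hratio.le]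
    field_simp
  have hpow : (M' / M) ^ (3/2 : ℝ) = b ^ 3 := by
    rw [show b = (M' / M) ^ (1/2 : ℝ) from Real.sqrt_eq_rpow _,
      ← Real.rpow_mul_natCast hratio.le]
    norm_num
  refine EReal.coe_mul_sInf_le_sInf (by positivity) ?_
  rintro _ ⟨ρ, hρ, rfl⟩
  refine ⟨_, ⟨_, hmass ▸ inFM_comp_smul hb.ne' hρ, rfl⟩, ?_⟩
  rw [hpow]
  exact_mod_cast pow_three_mul_Hr_comp_smul_le hΨ0 hρ.1 hb hb1
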